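/- Verification of Hessian smoothness and spectral comparability for logistic regression: assume sup_{t∈ℕ} ‖x_t‖₂ ≤ C₈ for a constant C₈ > 0. Then: (i) for all t ∈ ℕ and all θ, θ' ∈ Θ_r, ‖∇²ℓ_t(θ) − ∇²ℓ_t(θ')‖₂ ≤ C₈³ ‖θ − θ'‖₂; and (ii) for all t ∈ ℕ and all θ, θ + h ∈ Θ_r, e^{−√6 C₈ ‖h‖₂} F_{t,θ} ⪯ F_{t,θ+h} ⪯ e^{√6 C₈ ‖h‖₂} F_{t,θ}, where F_{t,θ} = Σ_{s=1}^{t} b''(x_sᵀθ) x_s x_sᵀ. -/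

import Mathlib

open Matrix Real
open scoped RealInnerProductSpace BigOperators

noncomputable section

/-- Vectors in `ℝ^p` with the Euclidean (`ℓ²`) norm. -/
abbrev Vec (p : ℕ) := EuclideanSpace ℝ (Fin p)

/-- Real `p × p` matrices. -/
abbrev Mat (p : ℕ) := Matrix (Fin p) (Fin p) ℝ

/-- A matrix applied to a Euclidean vector. -/
def mApp {p : ℕ} (A : Mat p) (v : Vec p) : Vec p := Matrix.toEuclideanLin A v

/-- The quadratic form `vᵀ A v`. -/
def quadForm {p : ℕ} (A : Mat p) (v : Vec p) : ℝ := ⟪v, mApp A v⟫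

/-- The `ℓ² → ℓ²` operator (spectral) norm of a matrix. -/
def specNorm {p : ℕ} (A : Mat p) : ℝ :=
  ‖LinearMap.toContinuousLinearMap (Matrix.toEuclideanLin A)‖

/-- The outer product `v vᵀ`. -/
def outer {p : ℕ} (v : Vec p) : Mat p :=
  Matrix.vecMulVec (fun i => v i) (fun i => v i)

/-- The logistic log-partition function `b(η) = log(1 + e^η)`. -/
def logisticB (η : ℝ) : ℝ := Real.log (1 + Real.exp η)

/-- Its first derivative `b'(η) = e^η/(1 + e^η)`. -/
def logisticB' (η : ℝ) : ℝ := Real.exp η / (1 + Real.exp η)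

/-- Its second derivative (logistic variance function)
`b''(η) = e^η/(1 + e^η)²`. -/
def logisticB'' (η : ℝ) : ℝ := Real.exp η / (1 + Real.exp η) ^ 2

/-- The Hessian `∇²ℓ_t(θ) = b''(x_tᵀθ) x_t x_tᵀ` of the logistic loss. -/
def logisticHess {p : ℕ} (xv : Vec p) (θ : Vec p) : Mat p :=
  logisticB'' ⟪xv, θ⟫ • outer xv

/-- `F_{t,θ} = Σ_{s=1}^{t} b''(x_sᵀθ) x_s x_sᵀ`. -/
def FmatL {p : ℕ} (xv : ℕ → Vec p) (t : ℕ) (θ : Vec p) : Mat p :=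
  ∑ s ∈ Finset.Icc 1 t, logisticHess (xv s) θ

/- ### Auxiliary lemmas -/

lemma logisticB''_pos' (a : ℝ) : 0 < logisticB'' a := by
  unfold logisticB''; positivity

lemma logisticB''_comp (a δ : ℝ) :
    Real.exp (-|δ|) * logisticB'' a ≤ logisticB'' (a + δ) := by
  unfold logisticB''
  have hu : 0 < Real.exp a := Real.exp_pos a
  have hw : 0 < Real.exp δ := Real.exp_pos δ
  rw [Real.exp_add]
  rcases abs_cases δ with ⟨h1, h2⟩ | ⟨h1, h2⟩
  · rw [h1, Real.exp_neg]
    have hw1 : 1 ≤ Real.exp δ := Real.one_le_exp h2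
    rw [inv_mul_eq_div, div_div, div_le_div_iff₀ (by positivity) (by positivity)]
    set u := Real.exp a; set w := Real.exp δ
    nlinarith [sq_nonneg (1 + u*w), sq_nonneg u, mul_pos hu hw, sq_nonneg (w*(1+u) - (1+u*w)),
      mul_nonneg (mul_nonneg hu.le hw.le) (sq_nonneg (w*(1+u) + (1+u*w)))]
  · rw [h1]
    have hw1 : Real.exp δ ≤ 1 := Real.exp_le_one_iff.mpr h2.le
    rw [neg_neg, mul_div_assoc', div_le_div_iff₀ (by positivity) (by positivity)]
    set u := Real.exp a; set w := Real.exp δ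
    nlinarith [mul_pos hu hw, sq_nonneg (1+u*w),
      mul_nonneg (mul_nonneg hu.le hw.le) (mul_nonneg (mul_nonneg hu.le hw.le)
        (sub_nonneg.2 hw1))]

lemma hasDeriv_logisticB'' (η : ℝ) : HasDerivAt logisticB''
    ((Real.exp η * (1 + Real.exp η) ^ 2 - Real.exp η * (2 * (1 + Real.exp η) ^ 1 * Real.exp η))
      / ((1 + Real.exp η) ^ 2) ^ 2) η := by
  have h0 : (1:ℝ) + Real.exp η ≠ 0 := by positivity
  have h1 : HasDerivAt Real.exp (Real.exp η) η := Real.hasDerivAt_exp η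
  have h2 : HasDerivAt (fun η => (1 + Real.exp η) ^ 2)
      (2 * (1 + Real.exp η) ^ 1 * Real.exp η) η := by
    exact (((hasDerivAt_const η (1:ℝ)).add h1).pow 2).congr_deriv (by norm_num)
  exact h1.div h2 (pow_ne_zero 2 h0)

lemma logisticB''_lipschitz (x y : ℝ) : |logisticB'' x - logisticB'' y| ≤ |x - y| := by
  have := Convex.norm_image_sub_le_of_norm_deriv_le (s := Set.univ) (f := logisticB'')
    (C := 1) (fun z _ => (hasDeriv_logisticB'' z).differentiableAt)
    (fun z _ => by
      rw [(hasDeriv_logisticB'' z).deriv]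
      have hu : 0 < Real.exp z := Real.exp_pos z
      have h1 : (0:ℝ) < ((1 + Real.exp z) ^ 2) ^ 2 := by positivity
      rw [Real.norm_eq_abs, abs_div, abs_of_pos h1, div_le_one h1, abs_le]
      set u := Real.exp z
      constructor <;> nlinarith [sq_nonneg (1+u), sq_nonneg u, sq_nonneg (1-u),
        sq_nonneg (1+u-u*u)])
    convex_univ (Set.mem_univ y) (Set.mem_univ x)
  simpa [Real.norm_eq_abs] using this

lemma mApp_outer {p : ℕ} (v w : Vec p) : mApp (outer v) w = ⟪v, w⟫ • v := by
  ext i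
  simp [mApp, Matrix.toEuclideanLin_apply, outer, Matrix.mulVec, Matrix.vecMulVec_apply,
    dotProduct, PiLp.inner_apply, RCLike.inner_apply, conj_trivial, Finset.mul_sum,
    Finset.sum_mul, mul_comm, mul_assoc, mul_left_comm]

lemma specNorm_smul_outer_le {p : ℕ} (c : ℝ) (v : Vec p) :
    specNorm (c • outer v) ≤ |c| * ‖v‖ ^ 2 := by
  apply ContinuousLinearMap.opNorm_le_bound _ (by positivity)
  intro w
  have : (LinearMap.toContinuousLinearMap (Matrix.toEuclideanLin (c • outer v))) w
      = c • (⟪v, w⟫ • v) := by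
    simp only [LinearMap.coe_toContinuousLinearMap', _root_.map_smul,
      LinearEquiv.map_smul]
    rw [← mApp_outer v w]; rfl
  rw [this, norm_smul, norm_smul, Real.norm_eq_abs, Real.norm_eq_abs]
  calc |c| * (|⟪v, w⟫| * ‖v‖) ≤ |c| * ((‖v‖ * ‖w‖) * ‖v‖) := by
        gcongr; exact abs_real_inner_le_norm v w
    _ = |c| * ‖v‖ ^ 2 * ‖w‖ := by ring

lemma psd_smul_outer {p : ℕ} {c : ℝ} (hc : 0 ≤ c) (v : Vec p) :
    (c • outer v).PosSemidef := by
  rw [Matrix.posSemidef_iff_dotProduct_mulVec]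
  constructor
  · ext i j
    simp [Matrix.conjTranspose_apply, outer, Matrix.vecMulVec_apply, mul_comm]
  · intro x
    have h1 : (c • outer v) *ᵥ x = c • ((outer v) *ᵥ x) := Matrix.smul_mulVec c _ x
    have h2 : (outer v) *ᵥ x = fun i => v i * (∑ j, v j * x j) := by
      ext i
      simp [outer, Matrix.mulVec, Matrix.vecMulVec_apply, dotProduct, Finset.mul_sum,
        mul_assoc]
    have h3 : dotProduct x ((outer v) *ᵥ x) = (∑ j, v j * x j) ^ 2 := by
      rw [h2]
      simp only [dotProduct]
      rw [sq, Finset.sum_mul]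
      exact Finset.sum_congr rfl fun i _ => by ring
    simp only [star_trivial, h1, dotProduct_smul, smul_eq_mul, h3]
    positivity

lemma psd_add {p : ℕ} {A B : Mat p} (hA : A.PosSemidef) (hB : B.PosSemidef) :
    (A + B).PosSemidef := by
  refine Matrix.posSemidef_iff_dotProduct_mulVec.2 ⟨hA.1.add hB.1, fun x => ?_⟩
  have := add_nonneg (hA.dotProduct_mulVec_nonneg x) (hB.dotProduct_mulVec_nonneg x)
  simpa [Matrix.add_mulVec, dotProduct_add] using this

lemma psd_sum {p : ℕ} (s : Finset ℕ) (f : ℕ → Mat p) (hf : ∀ i ∈ s, (f i).PosSemidef) :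
    (∑ i ∈ s, f i).PosSemidef :=
  Finset.sum_induction f _ (fun _ _ => psd_add) Matrix.PosSemidef.zero hf

/-- Hessian smoothness and spectral comparability for
logistic regression (Proposition 6 of the paper);  `A ⪯ B` is
`(B − A).PosSemidef`. -/
theorem stmt14 {p : ℕ} (C₈ : ℝ) (hC₈ : 0 < C₈) (xv : ℕ → Vec p)
    (θstar : Vec p) (r : ℝ) (hr : 0 < r)
    (hx : ∀ t : ℕ, ‖xv t‖ ≤ C₈) :
    (∀ (t : ℕ) (θ θ' : Vec p), ‖θ - θstar‖ ≤ r → ‖θ' - θstar‖ ≤ r →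
      specNorm (logisticHess (xv t) θ - logisticHess (xv t) θ')
        ≤ C₈ ^ 3 * ‖θ - θ'‖) ∧
    (∀ (t : ℕ) (θ h : Vec p), ‖θ - θstar‖ ≤ r → ‖θ + h - θstar‖ ≤ r →
      (FmatL xv t (θ + h)
        - Real.exp (-(Real.sqrt 6 * C₈ * ‖h‖)) • FmatL xv t θ).PosSemidef ∧
      (Real.exp (Real.sqrt 6 * C₈ * ‖h‖) • FmatL xv t θ
        - FmatL xv t (θ + h)).PosSemidef) := by
  constructor
  · intro t θ θ' _ _
    have hd : logisticHess (xv t) θ - logisticHess (xv t) θ' =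
        (logisticB'' ⟪xv t, θ⟫ - logisticB'' ⟪xv t, θ'⟫) • outer (xv t) := by
      unfold logisticHess; rw [sub_smul]
    rw [hd]
    have hb := specNorm_smul_outer_le (logisticB'' ⟪xv t, θ⟫ - logisticB'' ⟪xv t, θ'⟫) (xv t)
    have h1 : |logisticB'' ⟪xv t, θ⟫ - logisticB'' ⟪xv t, θ'⟫| ≤ C₈ * ‖θ - θ'‖ :=
      calc |logisticB'' ⟪xv t, θ⟫ - logisticB'' ⟪xv t, θ'⟫|
          ≤ |⟪xv t, θ⟫ - ⟪xv t, θ'⟫| := logisticB''_lipschitz _ _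
        _ = |⟪xv t, θ - θ'⟫| := by rw [inner_sub_right]
        _ ≤ ‖xv t‖ * ‖θ - θ'‖ := abs_real_inner_le_norm _ _
        _ ≤ C₈ * ‖θ - θ'‖ := mul_le_mul_of_nonneg_right (hx t) (norm_nonneg _)
    have h2 : ‖xv t‖ ^ 2 ≤ C₈ ^ 2 := pow_le_pow_left₀ (norm_nonneg _) (hx t) 2
    nlinarith [abs_nonneg (logisticB'' ⟪xv t, θ⟫ - logisticB'' ⟪xv t, θ'⟫),
      norm_nonneg (θ - θ'), sq_nonneg (‖xv t‖), hC₈, norm_nonneg (xv t)]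
  · intro t θ h _ _
    have hc6 : (1:ℝ) ≤ Real.sqrt 6 := by
      rw [show (1:ℝ) = Real.sqrt 1 from (Real.sqrt_one).symm]
      exact Real.sqrt_le_sqrt (by norm_num)
    have hkey : ∀ s : ℕ, |⟪xv s, h⟫| ≤ Real.sqrt 6 * C₈ * ‖h‖ := fun s =>
      calc |⟪xv s, h⟫| ≤ ‖xv s‖ * ‖h‖ := abs_real_inner_le_norm _ _
        _ ≤ C₈ * ‖h‖ := mul_le_mul_of_nonneg_right (hx s) (norm_nonneg h)
        _ ≤ Real.sqrt 6 * C₈ * ‖h‖ := by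
            nlinarith [mul_nonneg (sub_nonneg.2 hc6) (mul_nonneg hC₈.le (norm_nonneg h))]
    constructor
    · have hrw : FmatL xv t (θ + h) - Real.exp (-(Real.sqrt 6 * C₈ * ‖h‖)) • FmatL xv t θ
          = ∑ s ∈ Finset.Icc 1 t,
            (logisticB'' ⟪xv s, θ + h⟫
              - Real.exp (-(Real.sqrt 6 * C₈ * ‖h‖)) * logisticB'' ⟪xv s, θ⟫) • outer (xv s) := by
        unfold FmatL logisticHess
        rw [Finset.smul_sum, ← Finset.sum_sub_distrib]
        exact Finset.sum_congr rfl fun s _ => by rw [smul_smul, sub_smul]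
      rw [hrw]
      refine psd_sum _ _ fun s _ => psd_smul_outer ?_ _
      have e1 : Real.exp (-(Real.sqrt 6 * C₈ * ‖h‖)) ≤ Real.exp (-|⟪xv s, h⟫|) :=
        Real.exp_le_exp.2 (by linarith [hkey s])
      have e2 := logisticB''_comp ⟪xv s, θ⟫ ⟪xv s, h⟫
      have hpos := (logisticB''_pos' ⟪xv s, θ⟫).le
      have := mul_le_mul_of_nonneg_right e1 hpos
      rw [inner_add_right]
      linarith
    · have hrw : Real.exp (Real.sqrt 6 * C₈ * ‖h‖) • FmatL xv t θ - FmatL xv t (θ + h)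
          = ∑ s ∈ Finset.Icc 1 t,
            (Real.exp (Real.sqrt 6 * C₈ * ‖h‖) * logisticB'' ⟪xv s, θ⟫
              - logisticB'' ⟪xv s, θ + h⟫) • outer (xv s) := by
        unfold FmatL logisticHess
        rw [Finset.smul_sum, ← Finset.sum_sub_distrib]
        exact Finset.sum_congr rfl fun s _ => by rw [smul_smul, sub_smul]
      rw [hrw]
      refine psd_sum _ _ fun s _ => psd_smul_outer ?_ _
      have e3 := logisticB''_comp (⟪xv s, θ⟫ + ⟪xv s, h⟫) (-⟪xv s, h⟫)
      rw [abs_neg, add_neg_cancel_right] at e3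
      have hmul : Real.exp (-|⟪xv s, h⟫|) * Real.exp |⟪xv s, h⟫| = 1 := by
        rw [← Real.exp_add]; simp
      have h4 : logisticB'' (⟪xv s, θ⟫ + ⟪xv s, h⟫)
          ≤ Real.exp |⟪xv s, h⟫| * logisticB'' ⟪xv s, θ⟫ := by
        nlinarith [Real.exp_pos |⟪xv s, h⟫|,
          (logisticB''_pos' (⟪xv s, θ⟫ + ⟪xv s, h⟫)).le]
      have e4 : Real.exp |⟪xv s, h⟫| ≤ Real.exp (Real.sqrt 6 * C₈ * ‖h‖) :=
        Real.exp_le_exp.2 (hkey s)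
      have := mul_le_mul_of_nonneg_right e4 (logisticB''_pos' ⟪xv s, θ⟫).le
      rw [inner_add_right]
      linarith
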